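/- Let β ∈ ℝ^{m_k+1} minimize ‖r(q(x_k)) + Σ_{i=0}^{m_k} β_i (r(q(x_k)) − r(x_{k−i}))‖ over all β ∈ ℝ^{m_k+1} (the NGMRESr least-squares problem), define x_{k+1} = q(x_k) + Σ_{i=0}^{m_k} β_i (q(x_k) − x_{k−i}) and r_{k+1} = r(x_{k+1}). Then ⟨r_{k+1}, P A r_k⟩ = 0, ⟨r_{k+1}, r_{k−j} − r_{k−i}⟩ = 0 for all indices 0 ≤ i, j ≤ m_k, and the preconditioned residual norms are nonincreasing: ‖r_{k+1}‖ ≤ ‖r_k‖. -/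
import Mathlib


open scoped RealInnerProductSpace

/-- Matrix-vector multiplication on Euclidean space. -/
noncomputable def mulV {n : ℕ} (M : Matrix (Fin n) (Fin n) ℝ)
    (v : EuclideanSpace ℝ (Fin n)) : EuclideanSpace ℝ (Fin n) :=
  Matrix.toEuclideanLin M v

lemma mulV_mul {n : ℕ} (M N : Matrix (Fin n) (Fin n) ℝ) (v : EuclideanSpace ℝ (Fin n)) :
    mulV (M * N) v = mulV M (mulV N v) := by
  simp [mulV, Matrix.toEuclideanLin_apply, Matrix.mulVec_mulVec]

lemma mulV_sub {n : ℕ} (M : Matrix (Fin n) (Fin n) ℝ) (u v : EuclideanSpace ℝ (Fin n)) :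
    mulV M (u - v) = mulV M u - mulV M v :=
  map_sub (Matrix.toEuclideanLin M) u v

lemma mulV_neg {n : ℕ} (M : Matrix (Fin n) (Fin n) ℝ) (u : EuclideanSpace ℝ (Fin n)) :
    mulV M (-u) = -(mulV M u) :=
  map_neg (Matrix.toEuclideanLin M) u

lemma mulV_smul {n : ℕ} (M : Matrix (Fin n) (Fin n) ℝ) (c : ℝ) (u : EuclideanSpace ℝ (Fin n)) :
    mulV M (c • u) = c • mulV M u :=
  map_smul (Matrix.toEuclideanLin M) c u

lemma mulV_sum {n : ℕ} (M : Matrix (Fin n) (Fin n) ℝ) (s : Finset ℕ)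
    (f : ℕ → EuclideanSpace ℝ (Fin n)) :
    mulV M (∑ i ∈ s, f i) = ∑ i ∈ s, mulV M (f i) :=
  map_sum (Matrix.toEuclideanLin M) f s

lemma perp_of_min {E : Type*} [NormedAddCommGroup E] [InnerProductSpace ℝ E]
    (v w : E) (h : ∀ t : ℝ, ‖v‖ ≤ ‖v + t • w‖) : ⟪v, w⟫ = 0 := by
  by_contra hne
  have hw : w ≠ 0 := by rintro rfl; simp at hne
  have hw2 : (0:ℝ) < ‖w‖ ^ 2 := pow_pos (norm_pos_iff.mpr hw) 2
  set t : ℝ := -⟪v, w⟫ / ‖w‖ ^ 2 with ht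
  have hwne : ‖w‖ ≠ 0 := norm_ne_zero_iff.mpr hw
  have hsq : ‖v + t • w‖ ^ 2 = ‖v‖ ^ 2 - ⟪v, w⟫ ^ 2 / ‖w‖ ^ 2 := by
    rw [norm_add_sq_real, real_inner_smul_right, norm_smul, Real.norm_eq_abs, mul_pow, sq_abs, ht]
    field_simp
    ring
  have h1 := h t
  have h2 : ‖v + t • w‖ ^ 2 < ‖v‖ ^ 2 := by
    rw [hsq]
    have : 0 < ⟪v, w⟫ ^ 2 / ‖w‖ ^ 2 := by positivity
    linarith
  nlinarith [norm_nonneg v, norm_nonneg (v + t • w)]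

/-- orthogonality and monotonicity of the NGMRESr preconditioned residuals. -/
theorem stmt_17 {n : ℕ} (A P : Matrix (Fin n) (Fin n) ℝ)
    (hA : IsUnit A.det) (hP : IsUnit P.det)
    (b : EuclideanSpace ℝ (Fin n))
    (q r : EuclideanSpace ℝ (Fin n) → EuclideanSpace ℝ (Fin n))
    (hq : ∀ y, q y = y + mulV P (b - mulV A y))
    (hr : ∀ y, r y = y - q y)
    (k m : ℕ) (hm : m ≤ k)
    (x : ℕ → EuclideanSpace ℝ (Fin n))
    (β : ℕ → ℝ)
    (hopt : ∀ c : ℕ → ℝ,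
      ‖r (q (x k)) + ∑ i ∈ Finset.range (m + 1), β i • (r (q (x k)) - r (x (k - i)))‖ ≤
      ‖r (q (x k)) + ∑ i ∈ Finset.range (m + 1), c i • (r (q (x k)) - r (x (k - i)))‖)
    (xk1 rk1 : EuclideanSpace ℝ (Fin n))
    (hx : xk1 = q (x k) + ∑ i ∈ Finset.range (m + 1), β i • (q (x k) - x (k - i)))
    (hrk1 : rk1 = r xk1) :
    ⟪rk1, mulV (P * A) (r (x k))⟫ = 0 ∧
    (∀ i j, i ≤ m → j ≤ m → ⟪rk1, r (x (k - j)) - r (x (k - i))⟫ = 0) ∧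
    ‖rk1‖ ≤ ‖r (x k)‖ := by
  -- r is affine with linear part mulV (P*A)
  have hrA : ∀ y, r y = mulV P (mulV A y - b) := by
    intro y
    rw [hr, hq]
    have : mulV P (mulV A y - b) = -(mulV P (b - mulV A y)) := by
      rw [show mulV A y - b = -(b - mulV A y) by abel, mulV_neg]
    rw [this]; abel
  have hdiff : ∀ y z, r y - r z = mulV (P * A) (y - z) := by
    intro y z
    rw [hrA, hrA, mulV_mul]
    have h : mulV A y - b - (mulV A z - b) = mulV A (y - z) := by
      rw [mulV_sub]; abel
    rw [← mulV_sub, h]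
  set v0 := r (q (x k)) with hv0
  set w : ℕ → EuclideanSpace ℝ (Fin n) := fun i => r (q (x k)) - r (x (k - i)) with hw
  -- key: rk1 = v0 + ∑ β i • w i
  have hkey : rk1 = v0 + ∑ i ∈ Finset.range (m + 1), β i • w i := by
    have h1 : r xk1 - v0 = mulV (P * A) (xk1 - q (x k)) := hdiff _ _
    have h2 : xk1 - q (x k) = ∑ i ∈ Finset.range (m + 1), β i • (q (x k) - x (k - i)) := by
      rw [hx]; abel
    have h3 : mulV (P * A) (∑ i ∈ Finset.range (m + 1), β i • (q (x k) - x (k - i)))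
        = ∑ i ∈ Finset.range (m + 1), β i • w i := by
      rw [mulV_sum]
      refine Finset.sum_congr rfl fun i _ => ?_
      rw [mulV_smul]
      congr 1
      exact (hdiff (q (x k)) (x (k - i))).symm
    rw [h2, h3] at h1
    rw [hrk1, (sub_eq_iff_eq_add'.mp h1)]
  -- orthogonality to each w i
  have horth : ∀ i0, i0 ≤ m → ⟪rk1, w i0⟫ = 0 := by
    intro i0 hi0
    apply perp_of_min
    intro t
    have h := hopt (fun i => β i + if i = i0 then t else 0)
    have hmem : i0 ∈ Finset.range (m + 1) := Finset.mem_range.2 (Nat.lt_succ_of_le hi0)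
    have hsum : ∑ i ∈ Finset.range (m + 1), (β i + if i = i0 then t else 0) • w i
        = (∑ i ∈ Finset.range (m + 1), β i • w i) + t • w i0 := by
      simp only [add_smul, Finset.sum_add_distrib, ite_smul, zero_smul]
      congr 1
      rw [Finset.sum_ite_eq' (Finset.range (m + 1)) i0 (fun i => t • w i), if_pos hmem]
    calc ‖rk1‖ = ‖v0 + ∑ i ∈ Finset.range (m + 1), β i • w i‖ := by rw [hkey]
      _ ≤ ‖v0 + ∑ i ∈ Finset.range (m + 1), (β i + if i = i0 then t else 0) • w i‖ := h
      _ = ‖rk1 + t • w i0‖ := by rw [hsum, hkey, add_assoc]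
  refine ⟨?_, ?_, ?_⟩
  · have h0 : mulV (P * A) (r (x k)) = -(w 0) := by
      have hqx : q (x k) - x k = -(r (x k)) := by rw [hr]; abel
      have h1 : w 0 = mulV (P * A) (q (x k) - x k) := by
        simp only [hw, Nat.sub_zero]
        exact hdiff _ _
      rw [h1, hqx, mulV_neg, neg_neg]
    rw [h0, inner_neg_right, horth 0 (Nat.zero_le m), neg_zero]
  · intro i j hi hj
    have : r (x (k - j)) - r (x (k - i)) = w i - w j := by simp only [hw]; abel
    rw [this, inner_sub_right, horth i hi, horth j hj, sub_zero]
  · have h := hopt (fun i => if i = 0 then (-1 : ℝ) else 0)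
    have hmem : 0 ∈ Finset.range (m + 1) := Finset.mem_range.2 (Nat.succ_pos m)
    have hsum : ∑ i ∈ Finset.range (m + 1), (if i = 0 then (-1:ℝ) else 0) • w i
        = -(w 0) := by
      simp only [ite_smul, zero_smul]
      rw [Finset.sum_ite_eq' (Finset.range (m + 1)) 0 (fun i => (-1:ℝ) • w i), if_pos hmem,
        neg_one_smul]
    have hvec : v0 + ∑ i ∈ Finset.range (m + 1), (if i = 0 then (-1:ℝ) else 0) • w i
        = r (x k) := by
      rw [hsum]
      simp only [hw, hv0, Nat.sub_zero]
      abel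
    calc ‖rk1‖ = ‖v0 + ∑ i ∈ Finset.range (m + 1), β i • w i‖ := by rw [hkey]
      _ ≤ ‖v0 + ∑ i ∈ Finset.range (m + 1), (if i = 0 then (-1:ℝ) else 0) • w i‖ := h
      _ = ‖r (x k)‖ := by rw [hvec]
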